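/- (Arithmetic core of the total interfering workload bound with at most k carry-in tasks.) Let ι be a type with decidable equality, S a finite set of ι, NC, DIFF, W : ι → ℕ, and k : ℕ. Suppose that for every j ∈ S, W j ≤ NC j + DIFF j, and that the set {j ∈ S : W j > NC j} has cardinality at most k. Then Σ_{j∈S} W j ≤ Σ_{j∈S} NC j + topSum k DIFF S. -/

import Mathlib

/-!
Only the tasks `j` with `NC j < W j` exceed their non-carry-in bound, and each of them exceeds it
by at most `DIFF j`. Those at most `k` excesses add up to a sum of `DIFF` over a subset of `S` of
size at most `k`, which `topSum k DIFF S` dominates.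
-/

/-- `topSum k f S` is the maximum of `∑ j in T, f j` over all subsets `T ⊆ S`
with `|T| ≤ k` (equivalently, the sum of the `min(k,|S|)` largest values of `f` on `S`). -/
def topSum {ι : Type*} [DecidableEq ι] (k : ℕ) (f : ι → ℕ) (S : Finset ι) : ℕ :=
  (S.powerset.filter (fun T => T.card ≤ k)).sup (fun T => ∑ j ∈ T, f j)

open Finset

theorem sum_le_topSum {ι : Type*} [DecidableEq ι] {k : ℕ} {f : ι → ℕ} {S T : Finset ι}
    (hTS : T ⊆ S) (hT : #T ≤ k) : ∑ j ∈ T, f j ≤ topSum k f S :=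
  le_sup (f := fun T => ∑ j ∈ T, f j) (mem_filter.mpr ⟨mem_powerset.mpr hTS, hT⟩)

theorem sum_le_sum_add_sum_filter_lt {ι M : Type*} [AddCommMonoid M] [LinearOrder M]
    [IsOrderedAddMonoid M] [CanonicallyOrderedAdd M] {S : Finset ι} {a b c : ι → M}
    (h : ∀ j ∈ S, a j ≤ b j + c j) :
    ∑ j ∈ S, a j ≤ ∑ j ∈ S, b j + ∑ j ∈ S with b j < a j, c j := by
  rw [sum_filter, ← sum_add_distrib]
  refine sum_le_sum fun j hj => ?_
  split_ifs with hlt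
  · exact h j hj
  · simpa using not_lt.mp hlt

theorem total_interfering_workload_bound {ι : Type*} [DecidableEq ι]
    (S : Finset ι) (NC DIFF W : ι → ℕ) (k : ℕ)
    (hW : ∀ j ∈ S, W j ≤ NC j + DIFF j)
    (hcard : (S.filter (fun j => NC j < W j)).card ≤ k) :
    ∑ j ∈ S, W j ≤ ∑ j ∈ S, NC j + topSum k DIFF S :=
  (sum_le_sum_add_sum_filter_lt hW).trans
    (Nat.add_le_add_left (sum_le_topSum (filter_subset _ S) hcard) _)
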